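/- arXiv:1806.00550 — 2 statements merged into one kernel-verified Lean document; each statement's English description precedes it below -/
import Mathlib

section
/- Under the setup, Assumptions 2–5, Condition 1 with δ ≤ Δ_δ, and the symmetric case hypothesis, for every w ∈ W_δ and every point θ̂(w) ∈ Ω_θ satisfying G(θ̂(w), w) = 0, one has ‖θ̂_IJ(w) − θ̂(w)‖₂ ≤ 2·C_op²·C_IJ·δ². -/
/- Swiss Army Infinitesimal Jackknife: main error bound (Theorem 1).
   Vectors in ℝ^D are `Fin D → ℝ`; ‖·‖₂ is the Euclidean norm of the
   vectorization, ‖·‖₁ the entrywise 1-norm, and `opNorm` the operator norm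
   induced by the Euclidean vector norm. -/

open scoped BigOperators

noncomputable def vnorm2 {ι : Type*} [Fintype ι] (v : ι → ℝ) : ℝ :=
  Real.sqrt (∑ i, (v i) ^ 2)

noncomputable def vnorm1 {ι : Type*} [Fintype ι] (v : ι → ℝ) : ℝ :=
  ∑ i, |v i|

noncomputable def mnorm1 {D : ℕ} (M : Matrix (Fin D) (Fin D) ℝ) : ℝ :=
  ∑ i, ∑ j, |M i j|

noncomputable def opNorm {D : ℕ} (M : Matrix (Fin D) (Fin D) ℝ) : ℝ :=
  ‖Matrix.toEuclideanCLM (𝕜 := ℝ) M‖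

/-- `G(θ, w) = (1/N) ∑ₙ wₙ gₙ(θ)`. -/
noncomputable def Gfun {N D : ℕ} (g : Fin N → (Fin D → ℝ) → Fin D → ℝ)
    (θ : Fin D → ℝ) (w : Fin N → ℝ) : Fin D → ℝ :=
  (N : ℝ)⁻¹ • ∑ n, w n • g n θ

/-- `H(θ, w) = (1/N) ∑ₙ wₙ hₙ(θ)`. -/
noncomputable def Hfun {N D : ℕ} (hm : Fin N → (Fin D → ℝ) → Matrix (Fin D) (Fin D) ℝ)
    (θ : Fin D → ℝ) (w : Fin N → ℝ) : Matrix (Fin D) (Fin D) ℝ :=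
  (N : ℝ)⁻¹ • ∑ n, w n • hm n θ

/-- The infinitesimal jackknife `θ̂_IJ(w) = θ̂₁ − H₁⁻¹ G(θ̂₁, w − 1_w)`. -/
noncomputable def thetaIJ {N D : ℕ} (g : Fin N → (Fin D → ℝ) → Fin D → ℝ)
    (hm : Fin N → (Fin D → ℝ) → Matrix (Fin D) (Fin D) ℝ)
    (θ1 : Fin D → ℝ) (w : Fin N → ℝ) : Fin D → ℝ :=
  θ1 - (Hfun hm θ1 1)⁻¹.mulVec (Gfun g θ1 (w - 1))

/- With `d := θ̂(w) - θ̂₁`, the error `θ̂_IJ(w) - θ̂(w)` equals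
`H₁⁻¹ (G(θ̂(w), w) - G(θ̂₁, w) - H₁ d)`, i.e. `H₁⁻¹` applied to the linearization error of
`G(·, w)` at `θ̂₁`.
On the segment `[θ̂₁, θ̂(w)]` the Jacobian of `G(·, 1)` is positive definite with inverse bounded
by `C_op`, so `G(·, 1)` is strongly monotone there and `‖d‖ ≤ C_op ‖G(θ̂(w), 1)‖ ≤ C_op δ`.
By the mean value inequality the linearization error is at most
`sup_t ‖H(θ̂₁ + t d, w) - H₁‖_F ‖d‖ ≤ (C_w L_h ‖d‖ + δ) ‖d‖`: Cauchy–Schwarz over `n` turns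
Assumption 4 into a bound on `H(·, w)`, and Condition 1 compares `H(θ̂₁, w)` with `H₁`.
Substituting `‖d‖ ≤ C_op δ` gives the claim. -/

open Matrix Set AffineMap

section Norms

variable {ι : Type*} [Fintype ι]

lemma vnorm2_eq_norm (v : ι → ℝ) : vnorm2 v = ‖WithLp.toLp 2 v‖ := by
  simp [EuclideanSpace.norm_eq, vnorm2]

lemma vnorm2_nonneg (v : ι → ℝ) : 0 ≤ vnorm2 v := Real.sqrt_nonneg _

lemma vnorm2_sq (v : ι → ℝ) : vnorm2 v ^ 2 = v ⬝ᵥ v := by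
  rw [vnorm2, Real.sq_sqrt (by positivity)]
  simp only [dotProduct, sq]

lemma vnorm2_eq_zero {v : ι → ℝ} : vnorm2 v = 0 ↔ v = 0 := by
  rw [vnorm2_eq_norm, norm_eq_zero, WithLp.toLp_eq_zero]

lemma vnorm2_add_le (u v : ι → ℝ) : vnorm2 (u + v) ≤ vnorm2 u + vnorm2 v := by
  simpa only [vnorm2_eq_norm, WithLp.toLp_add] using norm_add_le _ _

lemma vnorm2_smul (c : ℝ) (v : ι → ℝ) : vnorm2 (c • v) = |c| * vnorm2 v := by
  rw [vnorm2_eq_norm, vnorm2_eq_norm, WithLp.toLp_smul, norm_smul, Real.norm_eq_abs]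

lemma dotProduct_le_vnorm2_mul (u v : ι → ℝ) : u ⬝ᵥ v ≤ vnorm2 u * vnorm2 v := by
  simpa [vnorm2_eq_norm, EuclideanSpace.inner_toLp_toLp, dotProduct_comm v] using
    real_inner_le_norm (WithLp.toLp 2 u) (WithLp.toLp 2 v)

lemma vnorm1_neg (v : ι → ℝ) : vnorm1 (-v) = vnorm1 v := by
  simp [vnorm1]

lemma vnorm2_le_vnorm1 (v : ι → ℝ) : vnorm2 v ≤ vnorm1 v := by
  have h : ∑ i, v i ^ 2 ≤ (∑ i, |v i|) ^ 2 := by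
    simpa only [sq_abs] using
      Finset.sum_sq_le_sq_sum_of_nonneg (s := Finset.univ) fun i _ => abs_nonneg (v i)
  calc vnorm2 v ≤ √((∑ i, |v i|) ^ 2) := Real.sqrt_le_sqrt h
    _ = vnorm1 v := Real.sqrt_sq (by positivity)

variable {κ : Type*} [Fintype κ]

lemma vnorm2_mulVec_le (M : Matrix κ ι ℝ) (x : ι → ℝ) :
    vnorm2 (M *ᵥ x) ≤ vnorm2 (Function.uncurry M) * vnorm2 x := by
  have h : ∑ k, (M *ᵥ x) k ^ 2 ≤ (∑ p : κ × ι, Function.uncurry M p ^ 2) * ∑ i, x i ^ 2 := by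
    rw [Fintype.sum_prod_type, Finset.sum_mul]
    exact Finset.sum_le_sum fun k _ => Finset.sum_mul_sq_le_sq_mul_sq _ (M k) x
  rw [vnorm2, vnorm2, vnorm2, ← Real.sqrt_mul (by positivity)]
  exact Real.sqrt_le_sqrt h

lemma vnorm2_uncurry_transpose (M : Matrix κ ι ℝ) :
    vnorm2 (Function.uncurry Mᵀ) = vnorm2 (Function.uncurry M) := by
  simp only [vnorm2, Function.uncurry, transpose_apply]
  rw [← (Equiv.prodComm κ ι).sum_comp]
  rfl

end Norms

lemma dotProduct_mulVec_mul_self_le {ι : Type*} [Fintype ι] {M : Matrix ι ι ℝ}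
    (hM : M.PosSemidef) (x y : ι → ℝ) :
    (x ⬝ᵥ (M *ᵥ y)) * (x ⬝ᵥ (M *ᵥ y)) ≤ (x ⬝ᵥ (M *ᵥ x)) * (y ⬝ᵥ (M *ᵥ y)) := by
  let := M.toSeminormedAddCommGroup hM
  let := M.toInnerProductSpace hM
  have h : ((M *ᵥ y) ⬝ᵥ star x) * ((M *ᵥ y) ⬝ᵥ star x)
      ≤ ((M *ᵥ x) ⬝ᵥ star x) * ((M *ᵥ y) ⬝ᵥ star y) := real_inner_mul_inner_self_le x y
  simpa only [star_trivial, dotProduct_comm _ x, dotProduct_comm _ y] using h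

section SquareMatrix

variable {D : ℕ}

lemma vnorm1_uncurry (M : Matrix (Fin D) (Fin D) ℝ) : vnorm1 (Function.uncurry M) = mnorm1 M := by
  simp [vnorm1, mnorm1, Fintype.sum_prod_type, Function.uncurry]

lemma vnorm2_mulVec_le_opNorm (M : Matrix (Fin D) (Fin D) ℝ) (x : Fin D → ℝ) :
    vnorm2 (M *ᵥ x) ≤ opNorm M * vnorm2 x := by
  simpa only [vnorm2_eq_norm, toEuclideanCLM_toLp, opNorm] using
    (toEuclideanCLM (𝕜 := ℝ) M).le_opNorm (WithLp.toLp 2 x)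

-- Cauchy–Schwarz for the inner product `xᵀ M y`, applied to `x` and `M⁻¹ x`.
lemma sq_vnorm2_le_mul_dotProduct_mulVec {M : Matrix (Fin D) (Fin D) ℝ} (hM : M.PosDef) {C : ℝ}
    (hC : opNorm M⁻¹ ≤ C) (x : Fin D → ℝ) : vnorm2 x ^ 2 ≤ C * (x ⬝ᵥ (M *ᵥ x)) := by
  set y := M⁻¹ *ᵥ x
  have hMy : M *ᵥ y = x := by
    rw [mulVec_mulVec, mul_nonsing_inv _ ((isUnit_iff_isUnit_det M).mp hM.isUnit), one_mulVec]
  have hCS := dotProduct_mulVec_mul_self_le hM.posSemidef x y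
  rw [hMy, ← vnorm2_sq, dotProduct_comm y] at hCS
  have hxy : x ⬝ᵥ y ≤ C * vnorm2 x ^ 2 := calc
    x ⬝ᵥ y ≤ vnorm2 x * vnorm2 y := dotProduct_le_vnorm2_mul x y
    _ ≤ vnorm2 x * (C * vnorm2 x) := mul_le_mul_of_nonneg_left
      ((vnorm2_mulVec_le_opNorm _ x).trans (mul_le_mul_of_nonneg_right hC (vnorm2_nonneg x)))
      (vnorm2_nonneg x)
    _ = C * vnorm2 x ^ 2 := by ring
  have hQ : 0 ≤ x ⬝ᵥ (M *ᵥ x) := by simpa using hM.posSemidef.re_dotProduct_nonneg x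
  have hC0 : 0 ≤ C := (norm_nonneg _).trans hC
  have h : vnorm2 x ^ 2 * vnorm2 x ^ 2 ≤ C * (x ⬝ᵥ (M *ᵥ x)) * vnorm2 x ^ 2 := by
    nlinarith [mul_le_mul_of_nonneg_left hxy hQ]
  nlinarith [mul_nonneg hC0 hQ, sq_nonneg (vnorm2 x)]

end SquareMatrix

lemma le_sub_of_le_hasDerivWithinAt_Icc {f f' : ℝ → ℝ} {c : ℝ}
    (hf : ∀ t ∈ Icc (0 : ℝ) 1, HasDerivWithinAt f (f' t) (Icc 0 1) t)
    (hc : ∀ t ∈ Icc (0 : ℝ) 1, c ≤ f' t) : c ≤ f 1 - f 0 := by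
  have hg : ∀ t ∈ Icc (0 : ℝ) 1, HasDerivWithinAt (fun t => f t - c * t) (f' t - c) (Icc 0 1) t :=
    fun t ht => by simpa using (hf t ht).fun_sub ((hasDerivWithinAt_id t _).const_mul c)
  have hmono : MonotoneOn (fun t => f t - c * t) (Icc 0 1) := by
    refine monotoneOn_of_hasDerivWithinAt_nonneg (f' := fun t => f' t - c) (convex_Icc 0 1)
      (fun t ht => (hg t ht).continuousWithinAt) (fun t ht => ?_) (fun t ht => ?_)
    · exact (hg t (interior_subset ht)).mono interior_subset
    · exact sub_nonneg.mpr (hc t (interior_subset ht))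
  have := hmono (left_mem_Icc.2 zero_le_one) (right_mem_Icc.2 zero_le_one) zero_le_one
  simp only [mul_zero, sub_zero, mul_one] at this
  linarith

section Linearization

variable {D : ℕ} {s : Set (Fin D → ℝ)} {F : (Fin D → ℝ) → Fin D → ℝ}
  {J : (Fin D → ℝ) → Matrix (Fin D) (Fin D) ℝ} {a b : Fin D → ℝ}

lemma hasDerivWithinAt_toLp_comp_lineMap (hs : Convex ℝ s)
    (hF : ∀ θ ∈ s, HasFDerivWithinAt F (J θ).mulVecLin.toContinuousLinearMap s θ)
    (ha : a ∈ s) (hb : b ∈ s) {t : ℝ} (ht : t ∈ Icc (0 : ℝ) 1) :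
    HasDerivWithinAt (fun t => WithLp.toLp 2 (F (lineMap a b t)))
      (WithLp.toLp 2 (J (lineMap a b t) *ᵥ (b - a))) (Icc 0 1) t := by
  have hmaps : MapsTo (lineMap a b) (Icc (0 : ℝ) 1) s := fun t ht => hs.lineMap_mem ha hb ht
  have hFγ := (hF _ (hmaps ht)).comp_hasDerivWithinAt t
    (hasDerivAt_lineMap (a := a) (b := b)).hasDerivWithinAt hmaps
  exact ((EuclideanSpace.equiv (Fin D) ℝ).symm : (Fin D → ℝ) →L[ℝ] EuclideanSpace ℝ (Fin D)
    ).hasFDerivAt.comp_hasDerivWithinAt t hFγ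

lemma sq_vnorm2_sub_le_mul_dotProduct_sub (hs : Convex ℝ s)
    (hF : ∀ θ ∈ s, HasFDerivWithinAt F (J θ).mulVecLin.toContinuousLinearMap s θ)
    (hJ : ∀ θ ∈ s, (J θ).PosDef) {C : ℝ} (hC : ∀ θ ∈ s, opNorm (J θ)⁻¹ ≤ C)
    (ha : a ∈ s) (hb : b ∈ s) :
    vnorm2 (b - a) ^ 2 ≤ C * ((F b - F a) ⬝ᵥ (b - a)) := by
  have hf : ∀ t ∈ Icc (0 : ℝ) 1, HasDerivWithinAt (fun t => C * (F (lineMap a b t) ⬝ᵥ (b - a)))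
      (C * ((J (lineMap a b t) *ᵥ (b - a)) ⬝ᵥ (b - a))) (Icc 0 1) t := fun t ht =>
    (((hasDerivWithinAt_const t _ (WithLp.toLp 2 (b - a))).inner ℝ
      (hasDerivWithinAt_toLp_comp_lineMap hs hF ha hb ht)).const_mul C).congr_deriv
      (by rw [EuclideanSpace.inner_toLp_toLp, star_trivial, inner_zero_left, add_zero])
  have h := le_sub_of_le_hasDerivWithinAt_Icc hf fun t ht => by
    have hγ := hs.lineMap_mem ha hb ht
    rw [dotProduct_comm]
    exact sq_vnorm2_le_mul_dotProduct_mulVec (hJ _ hγ) (hC _ hγ) (b - a)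
  rwa [lineMap_apply_one, lineMap_apply_zero, ← mul_sub, ← sub_dotProduct] at h

lemma vnorm2_sub_le_mul_vnorm2_sub (hs : Convex ℝ s)
    (hF : ∀ θ ∈ s, HasFDerivWithinAt F (J θ).mulVecLin.toContinuousLinearMap s θ)
    (hJ : ∀ θ ∈ s, (J θ).PosDef) {C : ℝ} (hC : ∀ θ ∈ s, opNorm (J θ)⁻¹ ≤ C)
    (ha : a ∈ s) (hb : b ∈ s) :
    vnorm2 (b - a) ≤ C * vnorm2 (F b - F a) := by
  have h := sq_vnorm2_sub_le_mul_dotProduct_sub hs hF hJ hC ha hb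
  have hC0 : 0 ≤ C := (norm_nonneg _).trans (hC a ha)
  have hdot := mul_le_mul_of_nonneg_left (dotProduct_le_vnorm2_mul (F b - F a) (b - a)) hC0
  nlinarith [mul_nonneg hC0 (vnorm2_nonneg (F b - F a)), vnorm2_nonneg (b - a)]

lemma vnorm2_sub_sub_mulVec_le (hs : Convex ℝ s)
    (hF : ∀ θ ∈ s, HasFDerivWithinAt F (J θ).mulVecLin.toContinuousLinearMap s θ)
    (ha : a ∈ s) (hb : b ∈ s) (J₀ : Matrix (Fin D) (Fin D) ℝ) {K : ℝ}
    (hK : ∀ t ∈ Icc (0 : ℝ) 1, vnorm2 ((J (lineMap a b t) - J₀) *ᵥ (b - a)) ≤ K) :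
    vnorm2 (F b - F a - J₀ *ᵥ (b - a)) ≤ K := by
  have hf : ∀ t ∈ Icc (0 : ℝ) 1, HasDerivWithinAt
      (fun t => WithLp.toLp 2 (F (lineMap a b t)) - t • WithLp.toLp 2 (J₀ *ᵥ (b - a)))
      (WithLp.toLp 2 ((J (lineMap a b t) - J₀) *ᵥ (b - a))) (Icc 0 1) t := fun t ht => by
    simpa [sub_mulVec] using (hasDerivWithinAt_toLp_comp_lineMap hs hF ha hb ht).fun_sub
      ((hasDerivWithinAt_id t _).smul_const (WithLp.toLp 2 (J₀ *ᵥ (b - a))))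
  have h := norm_image_sub_le_of_norm_deriv_le_segment_01' hf fun t ht => by
    rw [← vnorm2_eq_norm]; exact hK t (Ico_subset_Icc_self ht)
  simpa [vnorm2_eq_norm, sub_right_comm] using h

end Linearization

section EstimatingEquation

variable {N D : ℕ} (g : Fin N → (Fin D → ℝ) → Fin D → ℝ)
  (hm : Fin N → (Fin D → ℝ) → Matrix (Fin D) (Fin D) ℝ)

lemma Gfun_sub_one (θ : Fin D → ℝ) (w : Fin N → ℝ) :
    Gfun g θ (w - 1) = Gfun g θ w - Gfun g θ 1 := by
  simp only [Gfun, Pi.sub_apply, sub_smul, Finset.sum_sub_distrib, smul_sub]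

lemma hasFDerivWithinAt_Gfun {s : Set (Fin D → ℝ)} {θ : Fin D → ℝ}
    (hg : ∀ n, HasFDerivWithinAt (g n) (hm n θ).mulVecLin.toContinuousLinearMap s θ)
    (u : Fin N → ℝ) :
    HasFDerivWithinAt (fun θ => Gfun g θ u) (Hfun hm θ u).mulVecLin.toContinuousLinearMap s θ := by
  refine ((HasFDerivWithinAt.fun_sum fun n _ => (hg n).const_smul (u n)).fun_const_smul
    (N : ℝ)⁻¹).congr_fderiv ?_
  ext x : 1
  simp [Hfun]

lemma vnorm2_uncurry_Hfun_sub_le (θ θ' : Fin D → ℝ) (u : Fin N → ℝ) :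
    vnorm2 (Function.uncurry (Hfun hm θ u - Hfun hm θ' u))
      ≤ vnorm2 u / √N * (vnorm2 (fun p : Fin N × Fin D × Fin D =>
          hm p.1 θ p.2.1 p.2.2 - hm p.1 θ' p.2.1 p.2.2) / √N) := by
  set Δ : Matrix (Fin N) (Fin D × Fin D) ℝ := fun n => Function.uncurry (hm n θ - hm n θ')
  have h : Function.uncurry (Hfun hm θ u - Hfun hm θ' u) = (N : ℝ)⁻¹ • (Δᵀ *ᵥ u) := by
    ext p
    simp only [Function.uncurry, Hfun, Matrix.sub_apply, Matrix.smul_apply, Matrix.sum_apply,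
      Pi.smul_apply, mulVec, dotProduct, smul_eq_mul, Finset.mul_sum, ← Finset.sum_sub_distrib]
    exact Finset.sum_congr rfl fun n _ => by rw [← mul_sub, ← mul_sub, mul_comm (u n)]; rfl
  have hΔ : vnorm2 (Function.uncurry Δ) = vnorm2 (fun p : Fin N × Fin D × Fin D =>
      hm p.1 θ p.2.1 p.2.2 - hm p.1 θ' p.2.1 p.2.2) := rfl
  have hN : (N : ℝ)⁻¹ = (√N)⁻¹ * (√N)⁻¹ := by
    rw [← mul_inv, Real.mul_self_sqrt (Nat.cast_nonneg N)]
  calc vnorm2 (Function.uncurry (Hfun hm θ u - Hfun hm θ' u))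
      ≤ (N : ℝ)⁻¹ * (vnorm2 (Function.uncurry Δᵀ) * vnorm2 u) := by
        rw [h, vnorm2_smul, abs_of_nonneg (by positivity)]
        gcongr
        exact vnorm2_mulVec_le _ _
    _ = _ := by rw [vnorm2_uncurry_transpose, hN, hΔ]; ring

lemma vnorm2_uncurry_Hfun_sub_le_add {θ θ1 : Fin D → ℝ} {w : Fin N → ℝ} {Cw L δ : ℝ}
    (hw : vnorm2 w / √N ≤ Cw)
    (hL : vnorm2 (fun p : Fin N × Fin D × Fin D =>
      hm p.1 θ p.2.1 p.2.2 - hm p.1 θ1 p.2.1 p.2.2) / √N ≤ L)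
    (hδ : mnorm1 (Hfun hm θ1 w - Hfun hm θ1 1) ≤ δ) :
    vnorm2 (Function.uncurry (Hfun hm θ w - Hfun hm θ1 1)) ≤ Cw * L + δ := by
  have hsplit : Function.uncurry (Hfun hm θ w - Hfun hm θ1 1)
      = Function.uncurry (Hfun hm θ w - Hfun hm θ1 w)
        + Function.uncurry (Hfun hm θ1 w - Hfun hm θ1 1) := by
    ext p; simp [Function.uncurry]
  have hw0 : 0 ≤ vnorm2 w / √N := div_nonneg (vnorm2_nonneg w) (Real.sqrt_nonneg _)
  rw [hsplit]
  refine (vnorm2_add_le _ _).trans (add_le_add ?_ ?_)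
  · exact (vnorm2_uncurry_Hfun_sub_le hm θ θ1 w).trans
      (mul_le_mul hw hL (div_nonneg (vnorm2_nonneg _) (Real.sqrt_nonneg _)) (hw0.trans hw))
  · exact (vnorm2_le_vnorm1 _).trans (vnorm1_uncurry _ ▸ hδ)

lemma vnorm2_Gfun_sub_sub_mulVec_le {Ω : Set (Fin D → ℝ)} (hΩ : Convex ℝ Ω)
    (hderiv : ∀ n, ∀ θ ∈ Ω,
      HasFDerivWithinAt (g n) (hm n θ).mulVecLin.toContinuousLinearMap Ω θ)
    {θ1 θw : Fin D → ℝ} (hθ1 : θ1 ∈ Ω) (hθw : θw ∈ Ω) {w : Fin N → ℝ} {Cw Lh δ Δ : ℝ}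
    (hLh : 0 ≤ Lh) (hΔ : vnorm2 (θw - θ1) ≤ Δ)
    (hsmooth : ∀ θ ∈ Ω, vnorm2 (θ - θ1) ≤ Δ →
      vnorm2 (fun p : Fin N × Fin D × Fin D =>
        hm p.1 θ p.2.1 p.2.2 - hm p.1 θ1 p.2.1 p.2.2) / √N ≤ Lh * vnorm2 (θ - θ1))
    (hw : vnorm2 w / √N ≤ Cw) (hδ : mnorm1 (Hfun hm θ1 w - Hfun hm θ1 1) ≤ δ) :
    vnorm2 (Gfun g θw w - Gfun g θ1 w - Hfun hm θ1 1 *ᵥ (θw - θ1))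
      ≤ (Cw * Lh * vnorm2 (θw - θ1) + δ) * vnorm2 (θw - θ1) := by
  refine vnorm2_sub_sub_mulVec_le hΩ
    (fun θ hθ => hasFDerivWithinAt_Gfun g hm (fun n => hderiv n θ hθ) w) hθ1 hθw _ fun t ht => ?_
  have hγ := hΩ.lineMap_mem hθ1 hθw ht
  have hdist : vnorm2 (lineMap θ1 θw t - θ1) ≤ vnorm2 (θw - θ1) := by
    rw [← vsub_eq_sub, lineMap_vsub_left, vsub_eq_sub, vnorm2_smul, abs_of_nonneg ht.1]
    exact mul_le_of_le_one_left (vnorm2_nonneg _) ht.2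
  have hL := (hsmooth _ hγ (hdist.trans hΔ)).trans (mul_le_mul_of_nonneg_left hdist hLh)
  rw [mul_assoc Cw]
  exact (vnorm2_mulVec_le _ _).trans (mul_le_mul_of_nonneg_right
    (vnorm2_uncurry_Hfun_sub_le_add hm hw hL hδ) (vnorm2_nonneg _))

lemma vnorm2_sub_le_of_Gfun_eq_zero {Ω : Set (Fin D → ℝ)} (hΩ : Convex ℝ Ω)
    (hderiv : ∀ n, ∀ θ ∈ Ω,
      HasFDerivWithinAt (g n) (hm n θ).mulVecLin.toContinuousLinearMap Ω θ)
    (hpos : ∀ θ ∈ Ω, (Hfun hm θ 1).PosDef) {C : ℝ} (hC : ∀ θ ∈ Ω, opNorm (Hfun hm θ 1)⁻¹ ≤ C)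
    {θ1 θw : Fin D → ℝ} (hθ1 : θ1 ∈ Ω) (hθw : θw ∈ Ω) {w : Fin N → ℝ} {δ : ℝ}
    (hroot : Gfun g θ1 1 = 0) (hrootw : Gfun g θw w = 0)
    (hδ : vnorm1 (Gfun g θw w - Gfun g θw 1) ≤ δ) :
    vnorm2 (θw - θ1) ≤ C * δ := by
  have hC0 : 0 ≤ C := (norm_nonneg _).trans (hC θ1 hθ1)
  rw [hrootw, zero_sub, vnorm1_neg] at hδ
  refine (vnorm2_sub_le_mul_vnorm2_sub hΩ
    (fun θ hθ => hasFDerivWithinAt_Gfun g hm (fun n => hderiv n θ hθ) 1) hpos hC hθ1 hθw).trans ?_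
  rw [hroot, sub_zero]
  exact mul_le_mul_of_nonneg_left ((vnorm2_le_vnorm1 _).trans hδ) hC0

lemma thetaIJ_sub_eq {θ1 θw : Fin D → ℝ} {w : Fin N → ℝ} (hH : IsUnit (Hfun hm θ1 1).det)
    (hroot : Gfun g θ1 1 = 0) (hrootw : Gfun g θw w = 0) :
    thetaIJ g hm θ1 w - θw
      = (Hfun hm θ1 1)⁻¹ *ᵥ (Gfun g θw w - Gfun g θ1 w - Hfun hm θ1 1 *ᵥ (θw - θ1)) := by
  rw [thetaIJ, Gfun_sub_one, hroot, hrootw, sub_zero, mulVec_sub, mulVec_sub, mulVec_mulVec,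
    nonsing_inv_mul _ hH, one_mulVec, mulVec_zero]
  abel

end EstimatingEquation

theorem swiss_army_ij_error_bound_general
    (N D : ℕ) (hD : 0 < D)
    -- setup: compact convex parameter domain
    (Ωθ : Set (Fin D → ℝ)) (hΩconv : Convex ℝ Ωθ)
    -- setup: the gₙ are continuously differentiable on Ωθ with Jacobians hₙ
    (g : Fin N → (Fin D → ℝ) → Fin D → ℝ)
    (hm : Fin N → (Fin D → ℝ) → Matrix (Fin D) (Fin D) ℝ)
    (hderiv : ∀ n, ∀ θ ∈ Ωθ,
      HasFDerivWithinAt (g n) ((hm n θ).mulVecLin.toContinuousLinearMap) Ωθ θ)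
    -- setup: θ̂₁ solves the estimating equation at weights 1_w
    (θ1 : Fin D → ℝ) (hθ1 : θ1 ∈ Ωθ) (hroot : Gfun g θ1 1 = 0)
    -- Assumption 2 (non-degeneracy)
    (Cop : ℝ)
    (hA2 : ∀ θ ∈ Ωθ, IsUnit (Hfun hm θ 1) ∧ opNorm (Hfun hm θ 1)⁻¹ ≤ Cop)
    -- Assumption 4 (local smoothness)
    (Δθ Lh : ℝ)
    (hA4 : ∀ θ ∈ Ωθ, vnorm2 (θ - θ1) ≤ Δθ →
      vnorm2 (fun p : Fin N × Fin D × Fin D =>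
          hm p.1 θ p.2.1 p.2.2 - hm p.1 θ1 p.2.1 p.2.2) / Real.sqrt N
        ≤ Lh * vnorm2 (θ - θ1))
    -- Assumption 5 (bounded weights)
    (W : Set (Fin N → ℝ)) (Cw : ℝ)
    (hA5 : ∀ w ∈ W, vnorm2 w / Real.sqrt N ≤ Cw)
    -- Condition 1 (set complexity)
    (δ : ℝ) (hδ : 0 ≤ δ) (Wδ : Set (Fin N → ℝ)) (hWδ : Wδ ⊆ W)
    (hC1g : ∀ w ∈ Wδ, ∀ θ ∈ Ωθ, vnorm1 (Gfun g θ w - Gfun g θ 1) ≤ δ)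
    (hC1h : ∀ w ∈ Wδ, ∀ θ ∈ Ωθ, mnorm1 (Hfun hm θ w - Hfun hm θ 1) ≤ δ)
    -- symmetric case hypothesis
    (hpos : ∀ θ ∈ Ωθ, (Hfun hm θ 1).PosDef)
    -- δ ≤ Δ_δ := min{Δθ/C_op, 1/(2 C_IJ C_op)} where C_IJ := 1 + D·C_w·L_h·C_op
    (hδΔ : δ ≤ min (Δθ / Cop) (1 / (2 * (1 + D * Cw * Lh * Cop) * Cop))) :
    ∀ w ∈ Wδ, ∀ θw ∈ Ωθ, Gfun g θw w = 0 →
      vnorm2 (thetaIJ g hm θ1 w - θw)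
        ≤ 2 * Cop ^ 2 * (1 + D * Cw * Lh * Cop) * δ ^ 2 := by
  intro w hw θw hθw hrootw
  have hCop : 0 ≤ Cop := (norm_nonneg _).trans (hA2 θ1 hθ1).2
  have herr := thetaIJ_sub_eq g hm ((isUnit_iff_isUnit_det _).mp (hpos θ1 hθ1).isUnit)
    hroot hrootw
  rcases (vnorm2_nonneg (θw - θ1)).eq_or_lt with hs | hs
  · obtain rfl : θw = θ1 := sub_eq_zero.mp (vnorm2_eq_zero.mp hs.symm)
    -- the error vanishes, and `0 ≤ δ ≤ 1 / (2 C_IJ C_op)` forces `C_IJ C_op ≥ 0`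
    have hK := one_div_nonneg.mp (hδ.trans (hδΔ.trans (min_le_right _ _)))
    rw [herr, sub_self, sub_self, mulVec_zero, sub_zero, mulVec_zero, vnorm2_eq_zero.mpr rfl]
    nlinarith [mul_nonneg (mul_nonneg hCop hK) (sq_nonneg δ)]
  set s := vnorm2 (θw - θ1)
  have hsδ : s ≤ Cop * δ := vnorm2_sub_le_of_Gfun_eq_zero g hm hΩconv hderiv hpos
    (fun θ hθ => (hA2 θ hθ).2) hθ1 hθw hroot hrootw (hC1g w hw θw hθw)
  have hsΔ : s ≤ Δθ := hsδ.trans ((le_div_iff₀' (pos_of_mul_pos_left (hs.trans_le hsδ) hδ)).mp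
    (hδΔ.trans (min_le_left _ _)))
  have hLh : 0 ≤ Lh := nonneg_of_mul_nonneg_left
    ((div_nonneg (vnorm2_nonneg _) (Real.sqrt_nonneg _)).trans (hA4 θw hθw hsΔ)) hs
  have hv := vnorm2_Gfun_sub_sub_mulVec_le g hm hΩconv hderiv hθ1 hθw hLh hsΔ hA4
    (hA5 w (hWδ hw)) (hC1h w hw θ1 hθ1)
  have hx : 0 ≤ Cw * Lh := mul_nonneg
    ((div_nonneg (vnorm2_nonneg w) (Real.sqrt_nonneg _)).trans (hA5 w (hWδ hw))) hLh
  have hD1 : (1 : ℝ) ≤ D := Nat.one_le_cast.mpr hD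
  rw [herr]
  calc _ ≤ Cop * ((Cw * Lh * s + δ) * s) :=
        (vnorm2_mulVec_le_opNorm _ _).trans (mul_le_mul (hA2 θ1 hθ1).2 hv (vnorm2_nonneg _) hCop)
    _ ≤ Cop * ((Cw * Lh * (Cop * δ) + δ) * (Cop * δ)) := by gcongr
    _ = (Cop * δ) ^ 2 * (1 + Cw * Lh * Cop) := by ring
    _ ≤ (Cop * δ) ^ 2 * (2 * (1 + D * Cw * Lh * Cop)) := by
        gcongr; nlinarith [mul_nonneg hx hCop]
    _ = 2 * Cop ^ 2 * (1 + D * Cw * Lh * Cop) * δ ^ 2 := by ring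

theorem swiss_army_ij_error_bound
    (N D : ℕ) (hN : 0 < N) (hD : 0 < D)
    -- setup: compact convex parameter domain
    (Ωθ : Set (Fin D → ℝ)) (hΩc : IsCompact Ωθ) (hΩconv : Convex ℝ Ωθ)
    -- setup: the gₙ are continuously differentiable on Ωθ with Jacobians hₙ
    (g : Fin N → (Fin D → ℝ) → Fin D → ℝ)
    (hm : Fin N → (Fin D → ℝ) → Matrix (Fin D) (Fin D) ℝ)
    (hderiv : ∀ n, ∀ θ ∈ Ωθ,
      HasFDerivWithinAt (g n) ((hm n θ).mulVecLin.toContinuousLinearMap) Ωθ θ)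
    (hcont : ∀ n, ∀ i j : Fin D, ContinuousOn (fun θ => hm n θ i j) Ωθ)
    -- setup: θ̂₁ solves the estimating equation at weights 1_w
    (θ1 : Fin D → ℝ) (hθ1 : θ1 ∈ Ωθ) (hroot : Gfun g θ1 1 = 0)
    -- Assumption 2 (non-degeneracy)
    (Cop : ℝ)
    (hA2 : ∀ θ ∈ Ωθ, IsUnit (Hfun hm θ 1) ∧ opNorm (Hfun hm θ 1)⁻¹ ≤ Cop)
    -- Assumption 3 (bounded averages)
    (Cg Ch : ℝ)
    (hA3g : ∀ θ ∈ Ωθ,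
      vnorm2 (fun p : Fin N × Fin D => g p.1 θ p.2) / Real.sqrt N ≤ Cg)
    (hA3h : ∀ θ ∈ Ωθ,
      vnorm2 (fun p : Fin N × Fin D × Fin D => hm p.1 θ p.2.1 p.2.2) / Real.sqrt N ≤ Ch)
    -- Assumption 4 (local smoothness)
    (Δθ Lh : ℝ) (hΔθ : 0 < Δθ)
    (hA4 : ∀ θ ∈ Ωθ, vnorm2 (θ - θ1) ≤ Δθ →
      vnorm2 (fun p : Fin N × Fin D × Fin D =>
          hm p.1 θ p.2.1 p.2.2 - hm p.1 θ1 p.2.1 p.2.2) / Real.sqrt N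
        ≤ Lh * vnorm2 (θ - θ1))
    -- Assumption 5 (bounded weights)
    (W : Set (Fin N → ℝ)) (Cw : ℝ)
    (hA5 : ∀ w ∈ W, vnorm2 w / Real.sqrt N ≤ Cw)
    -- Condition 1 (set complexity)
    (δ : ℝ) (hδ : 0 ≤ δ) (Wδ : Set (Fin N → ℝ)) (hWδ : Wδ ⊆ W)
    (hC1g : ∀ w ∈ Wδ, ∀ θ ∈ Ωθ, vnorm1 (Gfun g θ w - Gfun g θ 1) ≤ δ)
    (hC1h : ∀ w ∈ Wδ, ∀ θ ∈ Ωθ, mnorm1 (Hfun hm θ w - Hfun hm θ 1) ≤ δ)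
    -- symmetric case hypothesis
    (hsymm : ∀ n, ∀ θ ∈ Ωθ, (hm n θ).IsSymm)
    (hpos : ∀ θ ∈ Ωθ, (Hfun hm θ 1).PosDef)
    -- δ ≤ Δ_δ := min{Δθ/C_op, 1/(2 C_IJ C_op)} where C_IJ := 1 + D·C_w·L_h·C_op
    (hδΔ : δ ≤ min (Δθ / Cop) (1 / (2 * (1 + D * Cw * Lh * Cop) * Cop))) :
    ∀ w ∈ Wδ, ∀ θw ∈ Ωθ, Gfun g θw w = 0 →
      vnorm2 (thetaIJ g hm θ1 w - θw)
        ≤ 2 * Cop ^ 2 * (1 + D * Cw * Lh * Cop) * δ ^ 2 :=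
  swiss_army_ij_error_bound_general N D hD Ωθ hΩconv g hm hderiv θ1 hθ1 hroot Cop hA2 Δθ Lh hA4 W Cw
    hA5 δ hδ Wδ hWδ hC1g hC1h hpos hδΔ
end

section
/- Let g_n : ℝ^D → ℝ^D (n = 1,…,N) be continuously differentiable, define G(θ,w) := (1/N)·Σ_{n=1}^N w_n g_n(θ) and H(θ,w) := (1/N)·Σ_{n=1}^N w_n h_n(θ) with h_n the Jacobian of g_n. Let U ⊆ ℝ^N be an open set, w ∈ U, and let θ̂ : U → ℝ^D be differentiable at w with G(θ̂(w'), w') = 0 for all w' ∈ U. If H(θ̂(w), w) is invertible, then for every direction a ∈ ℝ^N the derivative of θ̂ at w satisfies Dθ̂(w)[a] = −H(θ̂(w), w)⁻¹ · G(θ̂(w), a); in particular, (dθ̂/dwᵀ)|_w · a = −H(θ̂(w),w)⁻¹ · (1/N)·Σ_{n=1}^N a_n g_n(θ̂(w)). -/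
theorem Matrix.eq_neg_inv_mulVec_of_mulVec_add_eq_zero {n α : Type*} [Fintype n]
    [DecidableEq n] [CommRing α] {A : Matrix n n α} (hA : IsUnit A) {x b : n → α}
    (h : A.mulVec x + b = 0) : x = -A⁻¹.mulVec b := by
  let := hA.invertible
  rw [← Matrix.mulVec_neg]
  exact (Matrix.inv_mulVec_eq_vec (neg_eq_of_add_eq_zero_left h)).symm

section

variable {N D : ℕ}

noncomputable def GfunCLM (g : Fin N → (Fin D → ℝ) → Fin D → ℝ) (θ : Fin D → ℝ) :
    (Fin N → ℝ) →L[ℝ] Fin D → ℝ :=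
  (N : ℝ)⁻¹ • ∑ n, (ContinuousLinearMap.proj n).smulRight (g n θ)

@[simp]
theorem GfunCLM_apply (g : Fin N → (Fin D → ℝ) → Fin D → ℝ) (θ : Fin D → ℝ) (a : Fin N → ℝ) :
    GfunCLM g θ a = Gfun g θ a := by
  simp [GfunCLM, Gfun]

theorem hasFDerivAt_Gfun_comp {g : Fin N → (Fin D → ℝ) → Fin D → ℝ}
    {hm : Fin N → (Fin D → ℝ) → Matrix (Fin D) (Fin D) ℝ} {θhat : (Fin N → ℝ) → Fin D → ℝ}
    {Dθhat : (Fin N → ℝ) →L[ℝ] (Fin D → ℝ)} {w : Fin N → ℝ}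
    (hderiv : ∀ n, HasFDerivAt (g n) (hm n (θhat w)).mulVecLin.toContinuousLinearMap (θhat w))
    (hdiff : HasFDerivAt θhat Dθhat w) :
    HasFDerivAt (fun w' => Gfun g (θhat w') w')
      ((Hfun hm (θhat w) w).mulVecLin.toContinuousLinearMap ∘L Dθhat + GfunCLM g (θhat w)) w := by
  have hterm : ∀ n, HasFDerivAt (fun w' : Fin N → ℝ => w' n • g n (θhat w'))
      (w n • ((hm n (θhat w)).mulVecLin.toContinuousLinearMap ∘L Dθhat)
        + (ContinuousLinearMap.proj n).smulRight (g n (θhat w))) w := fun n => by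
    simpa using (ContinuousLinearMap.proj n).hasFDerivAt.smul ((hderiv n).comp w hdiff)
  refine ((HasFDerivAt.fun_sum (u := Finset.univ) fun n _ => hterm n).const_smul
    (N : ℝ)⁻¹).congr_fderiv ?_
  ext a : 1
  simp [Hfun, GfunCLM, Finset.sum_add_distrib]

end

theorem weight_derivative_of_estimator_general
    (N D : ℕ)
    -- the gₙ are continuously differentiable with Jacobians hₙ
    (g : Fin N → (Fin D → ℝ) → Fin D → ℝ)
    (hm : Fin N → (Fin D → ℝ) → Matrix (Fin D) (Fin D) ℝ)
    (hderiv : ∀ n, ∀ θ : Fin D → ℝ,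
      HasFDerivAt (g n) ((hm n θ).mulVecLin.toContinuousLinearMap) θ)
    -- U is open, w ∈ U, and θ̂ is differentiable at w with derivative Dθ̂(w)
    (U : Set (Fin N → ℝ)) (hU : IsOpen U) (w : Fin N → ℝ) (hw : w ∈ U)
    (θhat : (Fin N → ℝ) → Fin D → ℝ)
    (Dθhat : (Fin N → ℝ) →L[ℝ] (Fin D → ℝ))
    (hdiff : HasFDerivAt θhat Dθhat w)
    -- θ̂ satisfies the estimating equation on U
    (hroot : ∀ w' ∈ U, Gfun g (θhat w') w' = 0)
    -- H(θ̂(w), w) is invertible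
    (hinv : IsUnit (Hfun hm (θhat w) w)) :
    ∀ a : Fin N → ℝ,
      Dθhat a = -(Hfun hm (θhat w) w)⁻¹.mulVec (Gfun g (θhat w) a) := by
  intro a
  have hvanish : (fun w' => Gfun g (θhat w') w') =ᶠ[nhds w] fun _ => 0 :=
    Filter.eventually_of_mem (hU.mem_nhds hw) hroot
  have hzero := (hasFDerivAt_Gfun_comp (fun n => hderiv n _) hdiff).unique
    (hasFDerivAt_zero_of_eventually_const 0 hvanish)
  apply Matrix.eq_neg_inv_mulVec_of_mulVec_add_eq_zero hinv
  simpa using congr($hzero a)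

theorem weight_derivative_of_estimator
    (N D : ℕ) (hN : 0 < N) (hD : 0 < D)
    -- the gₙ are continuously differentiable with Jacobians hₙ
    (g : Fin N → (Fin D → ℝ) → Fin D → ℝ)
    (hm : Fin N → (Fin D → ℝ) → Matrix (Fin D) (Fin D) ℝ)
    (hderiv : ∀ n, ∀ θ : Fin D → ℝ,
      HasFDerivAt (g n) ((hm n θ).mulVecLin.toContinuousLinearMap) θ)
    (hcont : ∀ n, ∀ i j : Fin D, Continuous (fun θ => hm n θ i j))
    -- U is open, w ∈ U, and θ̂ is differentiable at w with derivative Dθ̂(w)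
    (U : Set (Fin N → ℝ)) (hU : IsOpen U) (w : Fin N → ℝ) (hw : w ∈ U)
    (θhat : (Fin N → ℝ) → Fin D → ℝ)
    (Dθhat : (Fin N → ℝ) →L[ℝ] (Fin D → ℝ))
    (hdiff : HasFDerivAt θhat Dθhat w)
    -- θ̂ satisfies the estimating equation on U
    (hroot : ∀ w' ∈ U, Gfun g (θhat w') w' = 0)
    -- H(θ̂(w), w) is invertible
    (hinv : IsUnit (Hfun hm (θhat w) w)) :
    ∀ a : Fin N → ℝ,
      Dθhat a = -(Hfun hm (θhat w) w)⁻¹.mulVec (Gfun g (θhat w) a) :=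
  weight_derivative_of_estimator_general N D g hm hderiv U hU w hw θhat Dθhat hdiff hroot hinv
end
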